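/- If v is a λ-eigenvector of the Laplacian L₁ of G, then Bv is a λ-eigenvector of the Laplacian L_k of F_k(G), where B is the (n,k)-binomial matrix. -/

import Mathlib

open Finset

/-- The `k`-token graph of `G`: vertices are the `k`-subsets of `V`, two being adjacent
iff their symmetric difference is a pair `{a,b}` with `a ∈ A`, `b ∈ B`, `G.Adj a b`. -/
def tokenGraph {V : Type*} [DecidableEq V] (G : SimpleGraph V) (k : ℕ) :
    SimpleGraph {s : Finset V // s.card = k} where
  Adj A B := ∃ a b, a ∈ A.1 ∧ b ∈ B.1 ∧ G.Adj a b ∧ symmDiff A.1 B.1 = {a, b}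
  symm := by
    constructor
    rintro A B ⟨a, b, ha, hb, hab, hd⟩
    exact ⟨b, a, hb, ha, hab.symm, by rw [symmDiff_comm, hd, Finset.pair_comm]⟩
  loopless := by
    constructor
    rintro A ⟨a, b, ha, hb, hab, hd⟩
    rw [symmDiff_self] at hd
    exact (Finset.insert_ne_empty a {b}) hd.symm

noncomputable instance tokenGraph.instDecidableRelAdj {V : Type*} [DecidableEq V]
    (G : SimpleGraph V) (k : ℕ) : DecidableRel (tokenGraph G k).Adj :=
  Classical.decRel _

/-- The `(n,k)`-binomial matrix: rows are characteristic vectors of the `k`-subsets. -/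
def binMatrix (V : Type*) [DecidableEq V] (k : ℕ) :
    Matrix {s : Finset V // s.card = k} V ℝ :=
  fun A j => if j ∈ A.1 then 1 else 0

/-! Both `(L_k (B v)) A` and `(B (L₁ v)) A = ∑ a ∈ A, (L₁ v) a` equal the sum of `v a - v b` over
the edges `a b` of `G` leaving `A`: the neighbours of `A` in the token graph are the sets
`A - a + b` for such edges, and in `∑ a ∈ A, (L₁ v) a` the edges inside `A` cancel. Hence
`L_k B = B L₁`. For `1 ≤ k < n`, `B` is injective: if `B v = 0`, comparing the rows `S + a` and
`S + b` for a `(k - 1)`-set `S` avoiding `a, b` shows that `v` is constant, and then any row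
gives `k • v = 0`. -/

open Matrix

namespace Finset

variable {α : Type*} [DecidableEq α] {s t : Finset α} {a b a' b' : α}

theorem symmDiff_eq_pair_iff (ha : a ∈ s) (hb : b ∈ t) :
    symmDiff s t = {a, b} ↔ b ∉ s ∧ t = insert b (s.erase a) := by
  simp only [Finset.ext_iff, mem_symmDiff, mem_insert, mem_erase, mem_singleton]
  grind

theorem insert_erase_inj (hb : b ∉ s) (ha' : a' ∈ s) (hb' : b' ∉ s)
    (h : insert b (s.erase a) = insert b' (s.erase a')) : a = a' ∧ b = b' := by
  simp only [Finset.ext_iff, mem_insert, mem_erase] at h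
  grind

theorem card_insert_erase (ha : a ∈ s) (hb : b ∉ s) : #(insert b (s.erase a)) = #s := by
  rw [card_insert_of_notMem (fun h => hb (mem_of_mem_erase h)), card_erase_add_one ha]

end Finset

namespace SimpleGraph

variable {V : Type*} [Fintype V] [DecidableEq V] (G : SimpleGraph V) [DecidableRel G.Adj]

def edgeBoundary (s : Finset V) : Finset (V × V) :=
  (s ×ˢ sᶜ).filter fun p => G.Adj p.1 p.2

theorem mem_edgeBoundary {s : Finset V} {p : V × V} :
    p ∈ G.edgeBoundary s ↔ p.1 ∈ s ∧ p.2 ∉ s ∧ G.Adj p.1 p.2 := by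
  simp [edgeBoundary, and_assoc]

theorem lapMatrix_mulVec_apply_eq_sum_neighborFinset {R : Type*} [NonAssocRing R] (v : V → R)
    (a : V) : (G.lapMatrix R *ᵥ v) a = ∑ b ∈ G.neighborFinset a, (v a - v b) := by
  rw [lapMatrix_mulVec_apply, sum_sub_distrib, sum_const, card_neighborFinset_eq_degree,
    nsmul_eq_mul]

theorem sum_lapMatrix_mulVec_eq_sum_edgeBoundary {R : Type*} [NonAssocRing R] (v : V → R)
    (s : Finset V) :
    ∑ a ∈ s, (G.lapMatrix R *ᵥ v) a = ∑ p ∈ G.edgeBoundary s, (v p.1 - v p.2) := by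
  have inner : ∑ a ∈ s, ∑ b ∈ s, (if G.Adj a b then v a - v b else 0) = 0 := by
    have hswap : ∑ a ∈ s, ∑ b ∈ s, (if G.Adj a b then v b else 0) =
        ∑ a ∈ s, ∑ b ∈ s, (if G.Adj a b then v a else 0) := by
      rw [sum_comm]
      simp only [G.adj_comm]
    have hsplit : ∀ a b, (if G.Adj a b then v a - v b else 0) =
        (if G.Adj a b then v a else 0) - (if G.Adj a b then v b else 0) := by
      intro a b
      rw [ite_sub_ite, sub_zero]
    simp only [hsplit, sum_sub_distrib, hswap, sub_self]
  simp only [lapMatrix_mulVec_apply_eq_sum_neighborFinset, neighborFinset_eq_filter, sum_filter,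
    ← sum_add_sum_compl s, sum_add_distrib, inner, zero_add, edgeBoundary, sum_product]

end SimpleGraph

section TokenGraph

variable {V : Type*} [Fintype V] [DecidableEq V] (G : SimpleGraph V) [DecidableRel G.Adj] {k : ℕ}

theorem tokenGraph_adj_iff {A C : {s : Finset V // #s = k}} :
    (tokenGraph G k).Adj A C ↔
      ∃ p ∈ G.edgeBoundary A.1, C.1 = insert p.2 (A.1.erase p.1) := by
  simp only [SimpleGraph.mem_edgeBoundary, Prod.exists]
  constructor
  · rintro ⟨a, b, ha, hb, hab, hd⟩
    obtain ⟨hbA, hC⟩ := (symmDiff_eq_pair_iff ha hb).1 hd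
    exact ⟨a, b, ⟨ha, hbA, hab⟩, hC⟩
  · rintro ⟨a, b, ⟨ha, hbA, hab⟩, hC⟩
    have hb : b ∈ C.1 := hC ▸ mem_insert_self b _
    exact ⟨a, b, ha, hb, hab, (symmDiff_eq_pair_iff ha hb).2 ⟨hbA, hC⟩⟩

theorem sum_neighborFinset_tokenGraph {R : Type*} [AddCommMonoid R] (f : Finset V → R)
    (A : {s : Finset V // #s = k}) :
    ∑ C ∈ (tokenGraph G k).neighborFinset A, f C.1 =
      ∑ p ∈ G.edgeBoundary A.1, f (insert p.2 (A.1.erase p.1)) := by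
  symm
  refine sum_bij (fun p hp => ⟨insert p.2 (A.1.erase p.1), ?_⟩) ?_ ?_ ?_ (fun _ _ => rfl)
  · obtain ⟨ha, hb, -⟩ := G.mem_edgeBoundary.1 hp
    rw [card_insert_erase ha hb, A.2]
  · intro p hp
    rw [SimpleGraph.mem_neighborFinset, tokenGraph_adj_iff]
    exact ⟨p, hp, rfl⟩
  · intro p hp q hq h
    obtain ⟨-, hb, -⟩ := G.mem_edgeBoundary.1 hp
    obtain ⟨ha', hb', -⟩ := G.mem_edgeBoundary.1 hq
    obtain ⟨h1, h2⟩ := insert_erase_inj hb ha' hb' (congrArg Subtype.val h)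
    exact Prod.ext h1 h2
  · intro C hC
    rw [SimpleGraph.mem_neighborFinset, tokenGraph_adj_iff] at hC
    obtain ⟨p, hp, hC⟩ := hC
    exact ⟨p, hp, Subtype.ext hC.symm⟩

end TokenGraph

section BinMatrix

variable {V : Type*} [Fintype V] [DecidableEq V] {k : ℕ}

theorem binMatrix_mulVec_apply (v : V → ℝ) (A : {s : Finset V // #s = k}) :
    (binMatrix V k *ᵥ v) A = ∑ j ∈ A.1, v j := by
  simp [binMatrix, Matrix.mulVec, dotProduct, ite_mul, sum_ite_mem]

theorem tokenGraph_lapMatrix_mulVec_binMatrix_mulVec (G : SimpleGraph V) [DecidableRel G.Adj]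
    (v : V → ℝ) :
    (tokenGraph G k).lapMatrix ℝ *ᵥ (binMatrix V k *ᵥ v) =
      binMatrix V k *ᵥ (G.lapMatrix ℝ *ᵥ v) := by
  ext A
  rw [SimpleGraph.lapMatrix_mulVec_apply_eq_sum_neighborFinset]
  simp only [binMatrix_mulVec_apply]
  rw [G.sum_lapMatrix_mulVec_eq_sum_edgeBoundary, sum_neighborFinset_tokenGraph G (fun S => ∑ j ∈ A.1, v j - ∑ j ∈ S, v j)]
  refine sum_congr rfl fun p hp => ?_
  obtain ⟨ha, hb, -⟩ := G.mem_edgeBoundary.1 hp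
  rw [sum_insert fun h => hb (mem_of_mem_erase h), sum_erase_eq_sub ha]
  ring

theorem apply_eq_apply_of_binMatrix_mulVec_eq_zero (hk1 : 1 ≤ k) (hk : k < Fintype.card V)
    {v : V → ℝ} (h : binMatrix V k *ᵥ v = 0) (a b : V) : v a = v b := by
  obtain rfl | hab := eq_or_ne a b
  · rfl
  have hcard : k - 1 ≤ #({a, b}ᶜ : Finset V) := by
    rw [card_compl, card_pair hab]
    omega
  obtain ⟨S, hS, hScard⟩ := exists_subset_card_eq hcard
  have haS : a ∉ S := fun ha => mem_compl.1 (hS ha) (by simp)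
  have hbS : b ∉ S := fun hb => mem_compl.1 (hS hb) (by simp)
  have hsum (c : V) (hc : c ∉ S) : v c + ∑ j ∈ S, v j = 0 := by
    have hk' : #(insert c S) = k := by rw [card_insert_of_notMem hc, hScard]; omega
    simpa [binMatrix_mulVec_apply, sum_insert hc] using congrFun h ⟨insert c S, hk'⟩
  linarith [hsum a haS, hsum b hbS]

theorem eq_zero_of_binMatrix_mulVec_eq_zero (hk1 : 1 ≤ k) (hk : k < Fintype.card V)
    {v : V → ℝ} (h : binMatrix V k *ᵥ v = 0) : v = 0 := by
  obtain ⟨S, -, hS⟩ := exists_subset_card_eq (s := (univ : Finset V)) (n := k)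
    (by rw [card_univ]; exact hk.le)
  obtain ⟨c, -⟩ : S.Nonempty := card_pos.1 (by omega)
  have hconst := apply_eq_apply_of_binMatrix_mulVec_eq_zero hk1 hk h
  have hkc : (k : ℝ) * v c = 0 := by
    have := congrFun h ⟨S, hS⟩
    rwa [binMatrix_mulVec_apply, sum_congr rfl fun j _ => hconst j c, sum_const, hS,
      nsmul_eq_mul] at this
  ext x
  rw [hconst x c, Pi.zero_apply]
  exact (mul_eq_zero.1 hkc).resolve_left (by exact_mod_cast (by omega : k ≠ 0))

end BinMatrix

theorem binMatrix_mulVec_eigenvector {V : Type*} [Fintype V] [DecidableEq V]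
    (G : SimpleGraph V) [DecidableRel G.Adj] (k : ℕ) (hk1 : 1 ≤ k)
    (hk : k ≤ Fintype.card V - 1) (lam : ℝ) (v : V → ℝ) (hv : v ≠ 0)
    (heig : (G.lapMatrix ℝ).mulVec v = lam • v) :
    (binMatrix V k).mulVec v ≠ 0 ∧
      ((tokenGraph G k).lapMatrix ℝ).mulVec ((binMatrix V k).mulVec v) =
        lam • (binMatrix V k).mulVec v := by
  refine ⟨fun h => hv (eq_zero_of_binMatrix_mulVec_eq_zero hk1 (by omega) h), ?_⟩
  rw [tokenGraph_lapMatrix_mulVec_binMatrix_mulVec, heig, mulVec_smul]
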